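/- arXiv:1106.5279 — 4 statements merged into one kernel-verified Lean document; each statement's English description precedes it below -/
import Mathlib

section
/- If G is a self-Petrial embedded graph (i.e., G^{τ(E(G))} = G) with an odd number of edges, then P(G;λ) = 0. -/
open Polynomial

namespace Penrose

/-- Addition in the Klein four-group `Bool × Bool` (componentwise xor). -/
def kAdd (p q : Bool × Bool) : Bool × Bool := (xor p.1 q.1, xor p.2 q.2)

lemma kAdd_eq_zero_iff : ∀ p q : Bool × Bool, kAdd p q = (false, false) ↔ p = q := by decide
lemma kAdd_eq_right_iff : ∀ p q : Bool × Bool, kAdd p q = q ↔ p = (false, false) := by decide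
lemma kAdd_kAdd : ∀ p q : Bool × Bool, kAdd (kAdd p q) q = p := by decide

/-- The flags (corner triples) of a ribbon graph with edge set `E`: each edge carries
four flags. -/
abbrev Flags (E : Type) := E × Bool × Bool

/-- A ribbon graph (cellularly embedded graph, possibly non-orientable) with edge set `E`,
in the flag (graph-encoded map) model.  The involution `σ0` (crossing edge `e`) acts on the
four flags of `e` by adding `a e` in the Klein four-group, the involution `σ2` (switching
sides of `e`) by adding `b e`, and the fixed-point-free involution `s1` (moving to the
adjacent edge-end in the same vertex-face corner) is given as data.
Vertices are the orbits of `⟨s1, σ2⟩`, edges the orbits of `⟨σ0, σ2⟩`, and the faces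
(boundary components) the orbits of `⟨σ0, s1⟩`. -/
structure RibbonGraph (E : Type) where
  s1 : Flags E → Flags E
  s1_invol : ∀ f, s1 (s1 f) = f
  s1_ne : ∀ f, s1 f ≠ f
  a : E → Bool × Bool
  b : E → Bool × Bool
  a_ne : ∀ e, a e ≠ (false, false)
  b_ne : ∀ e, b e ≠ (false, false)
  ab_ne : ∀ e, a e ≠ b e

namespace RibbonGraph

variable {E : Type}

/-- The involution crossing an edge. -/
def σ0 (G : RibbonGraph E) (f : Flags E) : Flags E := (f.1, kAdd f.2 (G.a f.1))

/-- The involution changing the side (face) of an edge, staying at the same vertex. -/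
def σ2 (G : RibbonGraph E) (f : Flags E) : Flags E := (f.1, kAdd f.2 (G.b f.1))

lemma σ2_σ2 (G : RibbonGraph E) (f : Flags E) : G.σ2 (G.σ2 f) = f := by
  cases f with
  | mk e p => simp [σ2, kAdd_kAdd]

/-- The partial Petrial `G^{τ(A)}`: give a half-twist to every edge in `A`
(replace `σ0` by `σ0 σ2` on the flags of the edges of `A`). -/
def petrial [DecidableEq E] (G : RibbonGraph E) (A : Finset E) : RibbonGraph E where
  s1 := G.s1
  s1_invol := G.s1_invol
  s1_ne := G.s1_ne
  a := fun e => if e ∈ A then kAdd (G.a e) (G.b e) else G.a e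
  b := G.b
  a_ne := by
    intro e
    by_cases h : e ∈ A
    · simpa [h, kAdd_eq_zero_iff] using G.ab_ne e
    · simpa [h] using G.a_ne e
  b_ne := G.b_ne
  ab_ne := by
    intro e
    by_cases h : e ∈ A
    · simpa [h, kAdd_eq_right_iff] using G.a_ne e
    · simpa [h] using G.ab_ne e

/-- The partial dual `G^{δ(A)}`: swap the roles of `σ0` and `σ2` on the flags of the
edges of `A`. -/
def pdual [DecidableEq E] (G : RibbonGraph E) (A : Finset E) : RibbonGraph E where
  s1 := G.s1
  s1_invol := G.s1_invol
  s1_ne := G.s1_ne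
  a := fun e => if e ∈ A then G.b e else G.a e
  b := fun e => if e ∈ A then G.a e else G.b e
  a_ne := by
    intro e
    by_cases h : e ∈ A
    · simpa [h] using G.b_ne e
    · simpa [h] using G.a_ne e
  b_ne := by
    intro e
    by_cases h : e ∈ A
    · simpa [h] using G.a_ne e
    · simpa [h] using G.b_ne e
  ab_ne := by
    intro e
    by_cases h : e ∈ A
    · simpa [h] using (G.ab_ne e).symm
    · simpa [h] using G.ab_ne e

/-- One step of the boundary (face) walk. -/
def faceStep (G : RibbonGraph E) (x y : Flags E) : Prop := y = G.σ0 x ∨ y = G.s1 x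

/-- The number of faces (boundary components) of `G`. -/
noncomputable def nFaces (G : RibbonGraph E) : ℕ := Nat.card (Quot G.faceStep)

/-- One step of the walk around a vertex. -/
def vertStep (G : RibbonGraph E) (x y : Flags E) : Prop := y = G.σ2 x ∨ y = G.s1 x

/-- The number of vertices of `G`. -/
noncomputable def nVerts (G : RibbonGraph E) : ℕ := Nat.card (Quot G.vertStep)

/-- The number of edges of `G`. -/
noncomputable def nEdges (_G : RibbonGraph E) : ℕ := Nat.card E

/-- One step of a walk in (the total space of) `G`. -/
def compStep (G : RibbonGraph E) (x y : Flags E) : Prop :=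
  y = G.σ0 x ∨ y = G.σ2 x ∨ y = G.s1 x

/-- The number of connected components of `G`. -/
noncomputable def nComps (G : RibbonGraph E) : ℕ := Nat.card (Quot G.compStep)

/-- Two flags lie at the same vertex. -/
def VertexConn (G : RibbonGraph E) : Flags E → Flags E → Prop := Relation.EqvGen G.vertStep

/-- `G` is connected. -/
def Connected (G : RibbonGraph E) : Prop := ∀ x y : Flags E, Relation.EqvGen G.compStep x y

/-- `G` is cubic: every vertex has exactly three edge-ends, i.e. six flags. -/
def Cubic (G : RibbonGraph E) : Prop :=
  ∀ x : Flags E, Nat.card {y : Flags E // G.VertexConn x y} = 6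

/-- `G` is orientable. -/
def Orientable (G : RibbonGraph E) : Prop :=
  ∃ o : Flags E → Bool, ∀ f, o (G.σ0 f) = !(o f) ∧ o (G.σ2 f) = !(o f) ∧ o (G.s1 f) = !(o f)

/-- `G` is a plane graph: orientable and of total genus `0` (Euler's formula). -/
def Plane (G : RibbonGraph E) : Prop :=
  G.Orientable ∧ G.nVerts + G.nFaces = G.nEdges + 2 * G.nComps

/-- `G` is checkerboard colourable: its faces admit a proper 2-colouring. -/
def CheckerboardColourable (G : RibbonGraph E) : Prop :=
  ∃ c : Flags E → Bool, ∀ f, c (G.σ0 f) = c f ∧ c (G.s1 f) = c f ∧ c (G.σ2 f) = !(c f)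

/-- The (topological) Penrose polynomial
`P(G;λ) = ∑_{A ⊆ E(G)} (−1)^{|A|} λ^{f(G^{τ(A)})}`. -/
noncomputable def penrose [Fintype E] [DecidableEq E] (G : RibbonGraph E) : Polynomial ℤ :=
  ∑ A ∈ (Finset.univ : Finset E).powerset,
    (-1 : Polynomial ℤ) ^ A.card * X ^ (G.petrial A).nFaces

/-- The boundary-crossing involution of `G − e`: pass through the deleted edge `e`
via `σ2`, and cross any other edge via `σ0`. -/
def delσ0 [DecidableEq E] (G : RibbonGraph E) (e : E) (f : Flags E) : Flags E :=
  if f.1 = e then G.σ2 f else G.σ0 f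

/-- One step of the boundary walk of `G − e`. -/
def faceStepDel [DecidableEq E] (G : RibbonGraph E) (e : E) (x y : Flags E) : Prop :=
  y = G.delσ0 e x ∨ y = G.s1 x

/-- The number of faces (boundary components) of `G − e`. -/
noncomputable def nFacesDel [DecidableEq E] (G : RibbonGraph E) (e : E) : ℕ :=
  Nat.card (Quot (G.faceStepDel e))

/-- The Penrose polynomial `P(G − e; λ)` of the graph obtained from `G` by deleting the
edge `e`. -/
noncomputable def penroseDel [Fintype E] [DecidableEq E] (G : RibbonGraph E) (e : E) :
    Polynomial ℤ :=
  ∑ A ∈ ((Finset.univ : Finset E).erase e).powerset,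
    (-1 : Polynomial ℤ) ^ A.card * X ^ ((G.petrial A).nFacesDel e)

/-- The Penrose polynomial `P(G/e; λ)` of the contraction `G/e := G^{δ(e)} − e`. -/
noncomputable def penroseContr [Fintype E] [DecidableEq E] (G : RibbonGraph E) (e : E) :
    Polynomial ℤ :=
  (G.pdual {e}).penroseDel e

/-- One step of a walk in `G − e` (together with the leftover vertices of `e`). -/
def compStepDel (G : RibbonGraph E) (e : E) (x y : Flags E) : Prop :=
  (x.1 ≠ e ∧ y = G.σ0 x) ∨ y = G.σ2 x ∨ y = G.s1 x

/-- The number of connected components of `G − e`. -/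
noncomputable def nCompsDel (G : RibbonGraph E) (e : E) : ℕ :=
  Nat.card (Quot (G.compStepDel e))

/-- The edge `e` is a bridge of `G`: deleting it increases the number of connected
components. -/
def IsBridge (G : RibbonGraph E) (e : E) : Prop := G.nComps < G.nCompsDel e

/-- The edge `e` is a non-twisted loop bounding a 2-cell (a trivial loop): one of its
sides is a face traversing only `e`, once. -/
def IsTrivialLoop (G : RibbonGraph E) (e : E) : Prop :=
  ∃ p : Bool × Bool, G.s1 (e, p) = G.σ0 (e, p)

/-- Isomorphism (equivalence) of ribbon graphs over the same edge set. -/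
def IsIso (G H : RibbonGraph E) : Prop :=
  ∃ ψ : Flags E ≃ Flags E, (∀ f, ψ (G.s1 f) = H.s1 (ψ f)) ∧
    (∀ f, ψ (G.σ0 f) = H.σ0 (ψ f)) ∧ (∀ f, ψ (G.σ2 f) = H.σ2 (ψ f))

/-- Given a Penrose state `σ` of the medial graph `G_m` (a choice, at the medial vertex
`v_e` of each edge `e` of `G`, of the crossing transition if `σ e = true` and of the white
split otherwise), the transition used at `v_e` by the closed curves of the state. -/
def stateσ0 (G : RibbonGraph E) (σ : E → Bool) (f : Flags E) : Flags E :=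
  if σ f.1 then G.σ0 (G.σ2 f) else G.σ0 f

/-- The number `c(s)` of closed curves of the Penrose state `σ` of the medial graph. -/
noncomputable def stateCurves (G : RibbonGraph E) (σ : E → Bool) : ℕ :=
  Nat.card (Quot (fun x y : Flags E => y = G.stateσ0 σ x ∨ y = G.s1 x))

/-- A `k`-valuation of the medial graph `G_m`: an edge colouring of `G_m` (edges of `G_m`
correspond to `s1`-orbits of flags of `G`). -/
def IsValuation {n : ℕ} (G : RibbonGraph E) (c : Flags E → Fin n) : Prop :=
  ∀ f, c (G.s1 f) = c f

/-- The medial vertex `v_e` is total in the valuation `c`: all four incident medial edges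
receive the same colour. -/
def TotalAt {n : ℕ} (G : RibbonGraph E) (c : Flags E → Fin n) (e : E) : Prop :=
  ∀ p q : Bool × Bool, c (e, p) = c (e, q)

/-- The medial vertex `v_e` has white-split type with two distinct colours. -/
def WhiteAt {n : ℕ} (G : RibbonGraph E) (c : Flags E → Fin n) (e : E) : Prop :=
  (∀ p : Bool × Bool, c (G.σ0 (e, p)) = c (e, p)) ∧
    c (e, (false, false)) ≠ c (G.σ2 (e, (false, false)))

/-- The medial vertex `v_e` has crossing type with two distinct colours. -/
def CrossAt {n : ℕ} (G : RibbonGraph E) (c : Flags E → Fin n) (e : E) : Prop :=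
  (∀ p : Bool × Bool, c (G.σ0 (G.σ2 (e, p))) = c (e, p)) ∧
    c (e, (false, false)) ≠ c (G.σ0 (e, (false, false)))

/-- An admissible valuation: at every medial vertex the two monochromatic pairs have
distinct colours and form a white split or a crossing. -/
def Admissible {n : ℕ} (G : RibbonGraph E) (c : Flags E → Fin n) : Prop :=
  G.IsValuation c ∧ ∀ e : E, G.WhiteAt c e ∨ G.CrossAt c e

/-- A permissible valuation: every medial vertex is of white-split, crossing or total
type. -/
def Permissible {n : ℕ} (G : RibbonGraph E) (c : Flags E → Fin n) : Prop :=
  G.IsValuation c ∧ ∀ e : E, G.WhiteAt c e ∨ G.CrossAt c e ∨ G.TotalAt c e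

/-- The number of crossing-type medial vertices of a valuation. -/
noncomputable def crCount {n : ℕ} (G : RibbonGraph E) (c : Flags E → Fin n) : ℕ :=
  Nat.card {e : E // G.CrossAt c e}

/-- The number of total medial vertices of a valuation. -/
noncomputable def totCount {n : ℕ} (G : RibbonGraph E) (c : Flags E → Fin n) : ℕ :=
  Nat.card {e : E // G.TotalAt c e}

/-- A proper edge 3-colouring of `G`: edges meeting at a vertex get distinct colours. -/
def ProperEdge3Coloring (G : RibbonGraph E) (κ : E → Fin 3) : Prop :=
  ∀ e e' : E, e ≠ e' →
    (∃ p q : Bool × Bool, G.VertexConn (e, p) (e', q)) → κ e ≠ κ e'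

/-- The circuit partition polynomial `j(G_m^P ; x)` of the Penrose directed medial graph
of an oriented checkerboard coloured graph `G`: its states are exactly the Penrose states
of `G_m`, so `j(G_m^P ; x) = ∑_s x^{c(s)} = ∑_{A ⊆ E(G)} x^{f(G^{τ(A)})}`. -/
noncomputable def circuitPartitionMedial [Fintype E] [DecidableEq E] (G : RibbonGraph E) :
    Polynomial ℤ :=
  ∑ A ∈ (Finset.univ : Finset E).powerset, X ^ (G.petrial A).nFaces

/-- The faces of `G`, i.e. the vertices of the geometric dual `G*`. -/
def Face (G : RibbonGraph E) := Quot G.faceStep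

instance [Finite E] (G : RibbonGraph E) : Finite (Face G) :=
  Finite.of_surjective (Quot.mk _) (fun q => Quot.exists_rep q)

/-- The underlying simple graph of the geometric dual `G*`: vertices are the faces of `G`,
two distinct faces being adjacent when they share an edge. -/
def dualGraph (G : RibbonGraph E) : SimpleGraph (Face G) where
  Adj x y := x ≠ y ∧ ∃ g : Flags E, x = Quot.mk _ g ∧ y = Quot.mk _ (G.σ2 g)
  symm := by
    constructor
    rintro x y ⟨hxy, g, hx, hy⟩
    exact ⟨Ne.symm hxy, G.σ2 g, hy, by rw [σ2_σ2]; exact hx⟩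
  loopless := by constructor; rintro x ⟨h, -⟩; exact h rfl

/-- The chromatic polynomial of a finite simple graph, via Whitney's rank expansion:
`χ(H;λ) = ∑_{S ⊆ E(H)} (−1)^{|S|} λ^{c(S)}`, where `c(S)` is the number of connected
components of the spanning subgraph with edge set `S`. -/
noncomputable def chromPoly {V : Type} [Finite V] (H : SimpleGraph V) : Polynomial ℤ := by
  classical
  haveI := Fintype.ofFinite V
  exact ∑ S ∈ ((Finset.univ : Finset (Sym2 V)).filter (· ∈ H.edgeSet)).powerset,
    (-1 : Polynomial ℤ) ^ S.card * X ^ (Nat.card (Quot (fun x y : V => s(x, y) ∈ S)))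

/-- The chromatic polynomial `χ(G*; λ)` of the geometric dual of `G` (as a multigraph:
it is `0` when `G*` has a loop, i.e. when some edge of `G` has the same face on both of
its sides, and otherwise it is the chromatic polynomial of the underlying simple graph
of `G*`). -/
noncomputable def dualChrom [Finite E] (G : RibbonGraph E) : Polynomial ℤ := by
  classical
  exact if ∃ g : Flags E, Quot.mk G.faceStep (G.σ2 g) = Quot.mk G.faceStep g then 0
    else chromPoly G.dualGraph


private lemma kAdd_rot : ∀ p a b : Bool × Bool, kAdd p (kAdd a b) = kAdd (kAdd p b) a := by
  decide

private lemma kAdd_assoc' : ∀ p q r : Bool × Bool, kAdd (kAdd p q) r = kAdd p (kAdd q r) := by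
  decide

private lemma kAdd_cancel : ∀ p q : Bool × Bool, kAdd p (kAdd p q) = q := by decide

private lemma kAdd_zero' : ∀ p : Bool × Bool, kAdd p (false, false) = p := by decide

private lemma klein_cases : ∀ a b x : Bool × Bool, a ≠ (false, false) → b ≠ (false, false) →
    a ≠ b → x = (false, false) ∨ x = a ∨ x = b ∨ x = kAdd a b := by decide

/-- If a map commutes (on first components) with the two basic Klein-group translations of
a ribbon graph, then its first component is constant on the flags of each edge. -/
lemma fst_const {E : Type} (G : RibbonGraph E) (φ : Flags E → Flags E)
    (h1 : ∀ f : Flags E, (φ (f.1, kAdd f.2 (G.a f.1))).1 = (φ f).1)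
    (h2 : ∀ f : Flags E, (φ (f.1, kAdd f.2 (G.b f.1))).1 = (φ f).1) :
    ∀ (e : E) (p q : Bool × Bool), (φ (e, p)).1 = (φ (e, q)).1 := by
  have h3 : ∀ f : Flags E, (φ (f.1, kAdd f.2 (kAdd (G.a f.1) (G.b f.1)))).1 = (φ f).1 := by
    intro f
    rw [← kAdd_assoc']
    have := h2 (f.1, kAdd f.2 (G.a f.1))
    simp only at this
    rw [this]
    exact h1 f
  intro e p q
  have hq : q = kAdd p (kAdd p q) := (kAdd_cancel p q).symm
  rcases klein_cases (G.a e) (G.b e) (kAdd p q) (G.a_ne e) (G.b_ne e) (G.ab_ne e) with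
    h | h | h | h
  · rw [hq, h, kAdd_zero']
  · rw [hq, h]; exact (h1 (e, p)).symm
  · rw [hq, h]; exact (h2 (e, p)).symm
  · rw [hq, h]; exact (h3 (e, p)).symm

/-- If `G` is a self-Petrial embedded graph with an odd number of edges, then
`P(G;λ) = 0`. -/
theorem stmt4 {E : Type} [Fintype E] [DecidableEq E] (G : RibbonGraph E)
    (hself : IsIso (G.petrial Finset.univ) G) (hodd : Odd (Nat.card E)) :
    G.penrose = 0 := by
  classical
  obtain ⟨ψ, hs1, hσ0, hσ2⟩ := hself
  set H := G.petrial Finset.univ with hH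
  have hHa : ∀ e : E, H.a e = kAdd (G.a e) (G.b e) := by
    intro e; simp [hH, petrial]
  -- commutations on first components, for ψ
  have hψ1 : ∀ f : Flags E, (ψ (f.1, kAdd f.2 (H.a f.1))).1 = (ψ f).1 := by
    intro f
    have : ((f.1, kAdd f.2 (H.a f.1)) : Flags E) = H.σ0 f := rfl
    rw [this, hσ0 f]; rfl
  have hψ2 : ∀ f : Flags E, (ψ (f.1, kAdd f.2 (H.b f.1))).1 = (ψ f).1 := by
    intro f
    have : ((f.1, kAdd f.2 (H.b f.1)) : Flags E) = H.σ2 f := rfl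
    rw [this, hσ2 f]; rfl
  have hfst : ∀ (e : E) (p q : Bool × Bool), (ψ (e, p)).1 = (ψ (e, q)).1 :=
    fst_const H ψ hψ1 hψ2
  -- commutations for ψ.symm
  have hs0' : ∀ f : Flags E, ψ.symm (G.σ0 f) = H.σ0 (ψ.symm f) := by
    intro f
    apply ψ.injective
    rw [Equiv.apply_symm_apply, hσ0, Equiv.apply_symm_apply]
  have hs2' : ∀ f : Flags E, ψ.symm (G.σ2 f) = H.σ2 (ψ.symm f) := by
    intro f
    apply ψ.injective
    rw [Equiv.apply_symm_apply, hσ2, Equiv.apply_symm_apply]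
  have hψ1' : ∀ f : Flags E, (ψ.symm (f.1, kAdd f.2 (G.a f.1))).1 = (ψ.symm f).1 := by
    intro f
    have : ((f.1, kAdd f.2 (G.a f.1)) : Flags E) = G.σ0 f := rfl
    rw [this, hs0' f]; rfl
  have hψ2' : ∀ f : Flags E, (ψ.symm (f.1, kAdd f.2 (G.b f.1))).1 = (ψ.symm f).1 := by
    intro f
    have : ((f.1, kAdd f.2 (G.b f.1)) : Flags E) = G.σ2 f := rfl
    rw [this, hs2' f]; rfl
  have hfst' : ∀ (e : E) (p q : Bool × Bool), (ψ.symm (e, p)).1 = (ψ.symm (e, q)).1 :=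
    fst_const G ψ.symm hψ1' hψ2'
  -- the edge permutation induced by ψ
  let π : E ≃ E :=
    { toFun := fun e => (ψ (e, (false, false))).1
      invFun := fun e => (ψ.symm (e, (false, false))).1
      left_inv := by
        intro e
        have h := hfst' (ψ (e, (false, false))).1 (false, false) (ψ (e, (false, false))).2
        simp only [Prod.mk.eta, Equiv.symm_apply_apply] at h
        exact h
      right_inv := by
        intro e
        have h := hfst (ψ.symm (e, (false, false))).1 (false, false)
          (ψ.symm (e, (false, false))).2
        simp only [Prod.mk.eta, Equiv.apply_symm_apply] at h
        exact h }
  have hπ : ∀ f : Flags E, (ψ f).1 = π f.1 := by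
    intro f
    exact hfst f.1 f.2 (false, false)
  -- the two conjugation identities
  have hc2 : ∀ f : Flags E, ψ (G.σ0 (G.σ2 f)) = G.σ0 (ψ f) := by
    intro f
    have : G.σ0 (G.σ2 f) = H.σ0 f := by
      simp only [σ0, σ2, hHa, kAdd_rot]
    rw [this, hσ0]
  have hc1 : ∀ f : Flags E, ψ (G.σ0 f) = G.σ0 (G.σ2 (ψ f)) := by
    intro f
    have := hc2 (G.σ2 f)
    rw [σ2_σ2] at this
    rw [this]
    have h2 : ψ (G.σ2 f) = G.σ2 (ψ f) := by
      have : G.σ2 f = H.σ2 f := rfl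
      rw [this, hσ2]
    rw [h2]
  -- the complementing map on edge subsets
  let Φ : Finset E → Finset E := fun A => Finset.univ.filter (fun e => π e ∉ A)
  have key : ∀ (A : Finset E) (x : Flags E),
      ψ ((G.petrial (Φ A)).σ0 x) = (G.petrial A).σ0 (ψ x) := by
    intro A x
    by_cases h : π x.1 ∈ A
    · have hx : x.1 ∉ Φ A := by simp [Φ, h]
      have hψx : (ψ x).1 ∈ A := by rw [hπ]; exact h
      have l1 : (G.petrial (Φ A)).σ0 x = G.σ0 x := by
        simp [σ0, petrial, hx]
      have l2 : (G.petrial A).σ0 (ψ x) = G.σ0 (G.σ2 (ψ x)) := by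
        simp [σ0, σ2, petrial, hψx, kAdd_rot]
      rw [l1, l2, hc1]
    · have hx : x.1 ∈ Φ A := by simp [Φ, h]
      have hψx : (ψ x).1 ∉ A := by rw [hπ]; exact h
      have l1 : (G.petrial (Φ A)).σ0 x = G.σ0 (G.σ2 x) := by
        simp [σ0, σ2, petrial, hx, kAdd_rot]
      have l2 : (G.petrial A).σ0 (ψ x) = G.σ0 (ψ x) := by
        simp [σ0, petrial, hψx]
      rw [l1, l2, hc2]
  have hs1' : ∀ f : Flags E, ψ (G.s1 f) = G.s1 (ψ f) := hs1
  -- equality of face counts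
  have hface : ∀ A : Finset E, (G.petrial (Φ A)).nFaces = (G.petrial A).nFaces := by
    intro A
    unfold nFaces
    apply Nat.card_congr
    refine Quot.congr ψ ?_
    intro x y
    unfold faceStep
    constructor
    · rintro (h | h)
      · left; rw [h, key A x]
      · right; rw [h]; exact hs1' x
    · rintro (h | h)
      · left
        apply ψ.injective
        rw [h, key A x]
      · right
        apply ψ.injective
        rw [h]; exact (hs1' x).symm
  -- Φ is a bijection of the powerset, complementing cardinalities
  let Φ' : Finset E → Finset E := fun A => Finset.univ.filter (fun e => π.symm e ∉ A)
  have hΦ' : ∀ A : Finset E, Φ' (Φ A) = A := by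
    intro A
    ext a
    simp [Φ, Φ', Equiv.apply_symm_apply]
  have hΦ'' : ∀ A : Finset E, Φ (Φ' A) = A := by
    intro A
    ext a
    simp [Φ, Φ', Equiv.symm_apply_apply]
  have hcard : ∀ A : Finset E, (Φ A).card = Fintype.card E - A.card := by
    intro A
    have h1 : Finset.univ.filter (fun e => π e ∈ A) = A.map π.symm.toEmbedding := by
      ext a
      simp only [Finset.mem_filter, Finset.mem_univ, true_and, Finset.mem_map,
        Equiv.coe_toEmbedding]
      constructor
      · intro h; exact ⟨π a, h, by simp⟩
      · rintro ⟨b, hb, rfl⟩; simpa using hb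
    have h2 : (Finset.univ.filter (fun e => π e ∈ A)).card
        + (Finset.univ.filter (fun e => π e ∉ A)).card = Fintype.card E := by
      rw [Finset.card_filter_add_card_filter_not]
      exact Finset.card_univ
    have h3 : (Finset.univ.filter (fun e => π e ∈ A)).card = A.card := by
      rw [h1, Finset.card_map]
    simp only [Φ]
    omega
  have hm : Odd (Fintype.card E) := by rwa [Nat.card_eq_fintype_card] at hodd
  -- sign flip
  have hsign : ∀ A : Finset E, A ⊆ Finset.univ →
      ((-1 : Polynomial ℤ)) ^ (Φ A).card = -((-1 : Polynomial ℤ)) ^ A.card := by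
    intro A hA
    have hk : A.card ≤ Fintype.card E := by
      simpa using Finset.card_le_card hA
    rw [hcard A]
    have h1 : ((-1 : Polynomial ℤ)) ^ (Fintype.card E - A.card) * (-1) ^ A.card
        = (-1) ^ Fintype.card E := by
      rw [← pow_add, Nat.sub_add_cancel hk]
    have h2 : ((-1 : Polynomial ℤ)) ^ Fintype.card E = -1 := hm.neg_one_pow
    have h3 : ((-1 : Polynomial ℤ)) ^ A.card * (-1) ^ A.card = 1 := by
      rw [← pow_add]
      exact (Even.add_self A.card).neg_one_pow
    calc ((-1 : Polynomial ℤ)) ^ (Fintype.card E - A.card)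
        = ((-1 : Polynomial ℤ)) ^ (Fintype.card E - A.card)
            * ((-1) ^ A.card * (-1) ^ A.card) := by rw [h3, mul_one]
      _ = (((-1 : Polynomial ℤ)) ^ (Fintype.card E - A.card) * (-1) ^ A.card)
            * (-1) ^ A.card := by ring
      _ = -((-1 : Polynomial ℤ)) ^ A.card := by rw [h1, h2]; ring
  -- the reindexed sum
  have hsum : G.penrose = -G.penrose := by
    unfold penrose
    rw [← Finset.sum_neg_distrib]
    refine Finset.sum_bij' (i := fun A _ => Φ A) (j := fun A _ => Φ' A) ?_ ?_ ?_ ?_ ?_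
    · intro A _
      exact Finset.mem_powerset.2 (Finset.subset_univ _)
    · intro A _
      exact Finset.mem_powerset.2 (Finset.subset_univ _)
    · intro A _
      exact hΦ' A
    · intro A _
      exact hΦ'' A
    · intro A hA
      rw [hsign A (Finset.mem_powerset.1 hA), hface A]
      ring
  have h2 : (2 : Polynomial ℤ) * G.penrose = 0 := by linear_combination hsum
  rcases mul_eq_zero.1 h2 with h | h
  · exact absurd h (by norm_num)
  · exact h

end RibbonGraph

end Penrose
end

section
/- For any embedded graph G and any edge e, the Penrose polynomial satisfies the deletion–contraction-type relation P(G;λ) = P(G/e;λ) − P(G^{τ(e)}/e;λ), where contraction is defined by G/e := G^{δ(e)} − e. -/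
open Polynomial

namespace Penrose

namespace RibbonGraph

variable {E : Type}

lemma nFacesDel_pdual_eq {E : Type} [DecidableEq E] (G : RibbonGraph E) (e : E)
    (A : Finset E) (he : e ∉ A) :
    ((G.pdual {e}).petrial A).nFacesDel e = (G.petrial A).nFaces := by
  have hrel : ((G.pdual {e}).petrial A).faceStepDel e = (G.petrial A).faceStep := by
    funext x y
    have hσ : ((G.pdual {e}).petrial A).delσ0 e x = (G.petrial A).σ0 x := by
      obtain ⟨e', p⟩ := x
      by_cases h : e' = e
      · subst h
        simp [delσ0, σ0, σ2, petrial, pdual, he]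
      · simp [delσ0, σ0, σ2, petrial, pdual, h]
    show (y = _ ∨ y = _) = (y = _ ∨ y = _)
    rw [hσ]
    rfl
  unfold nFacesDel nFaces
  rw [hrel]

lemma nFacesDel_petrial_pdual_eq {E : Type} [DecidableEq E] (G : RibbonGraph E) (e : E)
    (A : Finset E) (he : e ∉ A) :
    (((G.petrial {e}).pdual {e}).petrial A).nFacesDel e = (G.petrial (insert e A)).nFaces := by
  have hrel : (((G.petrial {e}).pdual {e}).petrial A).faceStepDel e
      = (G.petrial (insert e A)).faceStep := by
    funext x y
    have hσ : (((G.petrial {e}).pdual {e}).petrial A).delσ0 e x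
        = (G.petrial (insert e A)).σ0 x := by
      obtain ⟨e', p⟩ := x
      by_cases h : e' = e
      · subst h
        simp [delσ0, σ0, σ2, petrial, pdual, he]
      · simp [delσ0, σ0, σ2, petrial, pdual, h]
    show (y = _ ∨ y = _) = (y = _ ∨ y = _)
    rw [hσ]
    rfl
  unfold nFacesDel nFaces
  rw [hrel]

/-- The deletion–contraction-type relation
`P(G;λ) = P(G/e;λ) − P(G^{τ(e)}/e;λ)`, where `G/e := G^{δ(e)} − e`. -/
theorem stmt5 {E : Type} [Fintype E] [DecidableEq E] (G : RibbonGraph E) (e : E) :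
    G.penrose = G.penroseContr e - (G.petrial {e}).penroseContr e := by
  classical
  have hu : (Finset.univ : Finset E) = insert e (Finset.univ.erase e) :=
    (Finset.insert_erase (Finset.mem_univ e)).symm
  unfold penrose penroseContr penroseDel
  rw [hu, Finset.sum_powerset_insert (Finset.notMem_erase e _)]
  rw [Finset.erase_insert (Finset.notMem_erase e _), ← Finset.sum_sub_distrib,
    ← Finset.sum_add_distrib]
  apply Finset.sum_congr rfl
  intro A hA
  have heA : e ∉ A := fun h =>
    Finset.notMem_erase e _ (Finset.mem_powerset.mp hA h)
  rw [nFacesDel_pdual_eq G e A heA, nFacesDel_petrial_pdual_eq G e A heA,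
    Finset.card_insert_of_notMem heA, pow_succ]
  ring

end RibbonGraph

end Penrose
end

section
/- For any embedded graph G and any edge e, P(G^{δτ(e)};λ) = P(G − e;λ) − P(G/e;λ), where G^{δτ(e)} = (G^{τ(e)})^{δ(e)} is a twisted dual of G. -/
open Polynomial

namespace Penrose

namespace RibbonGraph

variable {E : Type}

lemma kAdd_cancel_left : ∀ p q : Bool × Bool, kAdd q (kAdd p q) = p := by decide

/-- If `G₁` has the same `s1` as `G₂` and its `a`-data agrees with `G₂`'s except that at
`e` it equals `G₂`'s `b`, then the faces of `G₁` are the faces of `G₂ − e`. -/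
lemma nFaces_eq_nFacesDel [DecidableEq E] (G₁ G₂ : RibbonGraph E) (e : E)
    (hs : G₁.s1 = G₂.s1)
    (ha : ∀ f : E, G₁.a f = if f = e then G₂.b f else G₂.a f) :
    G₁.nFaces = G₂.nFacesDel e := by
  have h : G₁.faceStep = G₂.faceStepDel e := by
    funext x y
    have hσ : G₁.σ0 x = G₂.delσ0 e x := by
      simp only [σ0, σ2, delσ0, ha x.1]
      split <;> rfl
    simp [faceStep, faceStepDel, hσ, hs]
  unfold nFaces nFacesDel
  rw [h]

/-- For any embedded graph `G` and edge `e`,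
`P(G^{δτ(e)};λ) = P(G − e;λ) − P(G/e;λ)`, where `G^{δτ(e)} = (G^{τ(e)})^{δ(e)}`. -/
theorem stmt6 {E : Type} [Fintype E] [DecidableEq E] (G : RibbonGraph E) (e : E) :
    ((G.petrial {e}).pdual {e}).penrose = G.penroseDel e - G.penroseContr e := by
  classical
  set H := (G.petrial {e}).pdual {e} with hH
  have h1 : ∀ A : Finset E, e ∉ A →
      (H.petrial A).nFaces = (G.petrial A).nFacesDel e := by
    intro A he
    apply nFaces_eq_nFacesDel
    · rfl
    · intro f
      by_cases hf : f = e
      · subst hf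
        simp [hH, petrial, pdual, he]
      · by_cases hfA : f ∈ A <;> simp [hH, petrial, pdual, hf, hfA]
  have h2 : ∀ A : Finset E, e ∉ A →
      (H.petrial (insert e A)).nFaces = ((G.pdual {e}).petrial A).nFacesDel e := by
    intro A he
    apply nFaces_eq_nFacesDel
    · rfl
    · intro f
      by_cases hf : f = e
      · subst hf
        simp [hH, petrial, pdual, he, kAdd_cancel_left]
      · by_cases hfA : f ∈ A <;> simp [hH, petrial, pdual, hf, hfA]
  unfold penrose penroseContr penroseDel
  have huniv : (Finset.univ : Finset E) = insert e (Finset.univ.erase e) :=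
    (Finset.insert_erase (Finset.mem_univ e)).symm
  rw [huniv, Finset.sum_powerset_insert (Finset.notMem_erase e _)]
  have hA : ∀ A ∈ (Finset.univ.erase e).powerset, e ∉ A := by
    intro A hAmem
    exact fun h => Finset.notMem_erase e _ (Finset.mem_powerset.mp hAmem h)
  have e1 : ∑ A ∈ (Finset.univ.erase e).powerset,
      ((-1 : Polynomial ℤ) ^ A.card * X ^ (H.petrial A).nFaces)
      = ∑ A ∈ (Finset.univ.erase e).powerset,
      ((-1 : Polynomial ℤ) ^ A.card * X ^ ((G.petrial A).nFacesDel e)) := by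
    refine Finset.sum_congr rfl fun A hAmem => ?_
    rw [h1 A (hA A hAmem)]
  have e2 : ∑ A ∈ (Finset.univ.erase e).powerset,
      ((-1 : Polynomial ℤ) ^ (insert e A).card * X ^ (H.petrial (insert e A)).nFaces)
      = ∑ A ∈ (Finset.univ.erase e).powerset,
      (-((-1 : Polynomial ℤ) ^ A.card * X ^ (((G.pdual {e}).petrial A).nFacesDel e))) := by
    refine Finset.sum_congr rfl fun A hAmem => ?_
    rw [h2 A (hA A hAmem), Finset.card_insert_of_notMem (hA A hAmem), pow_succ]
    ring
  rw [e1, e2, Finset.sum_neg_distrib, Finset.erase_insert (Finset.notMem_erase e _)]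
  ring

end RibbonGraph

end Penrose
end

section
/- If e is a non-twisted loop of an embedded graph G that bounds a 2-cell (a trivial loop), then P(G;λ) = (λ − 1) P(G − e;λ). -/
open Polynomial

namespace Penrose

namespace RibbonGraph

variable {E : Type}

/-! ### Auxiliary lemmas for the trivial-loop deletion formula -/

private lemma kA1 : ∀ p a b : Bool × Bool, kAdd (kAdd p a) b = kAdd p (kAdd a b) := by decide
private lemma kA2 : ∀ p a b : Bool × Bool, kAdd (kAdd p (kAdd a b)) b = kAdd p a := by decide
private lemma kA3 : ∀ p a b : Bool × Bool, kAdd (kAdd p b) a = kAdd p (kAdd a b) := by decide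
private lemma kCover0 : ∀ p q a b : Bool × Bool, a = (false, false) ∨ b = (false, false) ∨
    a = b ∨ q = p ∨ q = kAdd p a ∨ q = kAdd p b ∨ q = kAdd p (kAdd a b) := by decide
private lemma kCover (p q a b : Bool × Bool) (ha : a ≠ (false, false))
    (hb : b ≠ (false, false)) (hab : a ≠ b) :
    q = p ∨ q = kAdd p a ∨ q = kAdd p b ∨ q = kAdd p (kAdd a b) := by
  rcases kCover0 p q a b with h | h | h | h | h | h | h
  exacts [absurd h ha, absurd h hb, absurd h hab, Or.inl h, Or.inr (Or.inl h),
    Or.inr (Or.inr (Or.inl h)), Or.inr (Or.inr (Or.inr h))]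
private lemma kA4 : ∀ p a b : Bool × Bool, kAdd (kAdd p b) (kAdd a b) = kAdd p a := by decide
private lemma kNe1 : ∀ p b : Bool × Bool, b ≠ (false, false) → kAdd p b ≠ p := by decide
private lemma kNe2 : ∀ p a b : Bool × Bool, a ≠ b → kAdd p a ≠ kAdd p b := by decide
private lemma kNe3 : ∀ p a b : Bool × Bool, a ≠ b → kAdd p (kAdd a b) ≠ p := by decide
private lemma kNe4 : ∀ p a b : Bool × Bool, b ≠ (false, false) →
    kAdd p (kAdd a b) ≠ kAdd p a := by decide

lemma σ0_σ0 (G : RibbonGraph E) (f : Flags E) : G.σ0 (G.σ0 f) = f := by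
  cases f with
  | mk e p => simp [σ0, kAdd_kAdd]

/-- Two relations whose quotients identify each other's steps have equivalent quotients. -/
def quotCongr {α : Sort*} {r s : α → α → Prop}
    (h1 : ∀ x y, r x y → Quot.mk s x = Quot.mk s y)
    (h2 : ∀ x y, s x y → Quot.mk r x = Quot.mk r y) : Quot r ≃ Quot s where
  toFun := Quot.lift (Quot.mk s) h1
  invFun := Quot.lift (Quot.mk r) h2
  left_inv := by
    intro q
    induction q using Quot.ind
    rfl
  right_inv := by
    intro q
    induction q using Quot.ind
    rfl

section TrivialLoop

variable [DecidableEq E] (G : RibbonGraph E) (e : E) (p : Bool × Bool)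

/-- In `G − e`, all four flags of a trivial loop `e` lie on one boundary component. -/
lemma delAll (hp : G.s1 (e, p) = G.σ0 (e, p)) (q : Bool × Bool) :
    Quot.mk (G.faceStepDel e) (e, q) = Quot.mk (G.faceStepDel e) (e, p) := by
  have hstepB : ∀ q' : Bool × Bool, Quot.mk (G.faceStepDel e) (e, q')
      = Quot.mk (G.faceStepDel e) (e, kAdd q' (G.b e)) := by
    intro q'
    exact Quot.sound (Or.inl (by simp [delσ0, σ2]))
  have hstepA : Quot.mk (G.faceStepDel e) (e, p)
      = Quot.mk (G.faceStepDel e) (e, kAdd p (G.a e)) :=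
    Quot.sound (Or.inr hp.symm)
  rcases kCover p q (G.a e) (G.b e) (G.a_ne e) (G.b_ne e) (G.ab_ne e) with h | h | h | h <;>
    subst h
  · rfl
  · exact hstepA.symm
  · exact (hstepB _).trans (by rw [kAdd_kAdd])
  · exact (hstepB _).trans (by rw [kA2]; exact hstepA.symm)

/-- In `G^{τ(e)}`, all four flags of a trivial loop `e` lie on one boundary component. -/
lemma twistAll (hp : G.s1 (e, p) = G.σ0 (e, p)) (q : Bool × Bool) :
    Quot.mk (G.petrial {e}).faceStep (e, q) = Quot.mk (G.petrial {e}).faceStep (e, p) := by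
  have hστ : ∀ q' : Bool × Bool,
      (G.petrial {e}).σ0 (e, q') = (e, kAdd q' (kAdd (G.a e) (G.b e))) := by
    intro q'; simp [petrial, σ0]
  have hstepT : ∀ q' : Bool × Bool, Quot.mk (G.petrial {e}).faceStep (e, q')
      = Quot.mk (G.petrial {e}).faceStep (e, kAdd q' (kAdd (G.a e) (G.b e))) :=
    fun q' => Quot.sound (Or.inl (hστ q').symm)
  have hs1 : G.s1 (e, kAdd p (G.a e)) = (e, p) := by
    have h := G.s1_invol (e, p)
    rw [hp] at h
    exact h
  have hstepA : Quot.mk (G.petrial {e}).faceStep (e, kAdd p (G.a e))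
      = Quot.mk (G.petrial {e}).faceStep (e, p) :=
    Quot.sound (Or.inr hs1.symm)
  rcases kCover p q (G.a e) (G.b e) (G.a_ne e) (G.b_ne e) (G.ab_ne e) with h | h | h | h <;>
    subst h
  · rfl
  · exact hstepA
  · exact (hstepT _).trans (by rw [kA4]; exact hstepA)
  · exact (hstepT _).trans (by rw [kAdd_kAdd])

/-- Twisting a trivial loop `e` and deleting it give the same number of faces. -/
lemma nFaces_petrial_eq_del (hp : G.s1 (e, p) = G.σ0 (e, p)) :
    (G.petrial {e}).nFaces = G.nFacesDel e := by
  unfold nFaces nFacesDel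
  apply Nat.card_congr
  apply quotCongr
  · intro x y hxy
    rcases hxy with h | h
    · obtain ⟨e', q⟩ := x
      by_cases he : e' = e
      · subst he
        subst h
        rw [show (G.petrial {e'}).σ0 (e', q) = (e', kAdd q (kAdd (G.a e') (G.b e'))) from by simp [petrial, σ0]]
        exact (delAll G e' p hp q).trans (delAll G e' p hp _).symm
      · subst h
        refine Quot.sound (Or.inl ?_)
        simp [petrial, σ0, delσ0, he]
    · exact Quot.sound (Or.inr h)
  · intro x y hxy
    rcases hxy with h | h
    · obtain ⟨e', q⟩ := x
      by_cases he : e' = e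
      · subst he
        subst h
        rw [show G.delσ0 e' (e', q) = (e', kAdd q (G.b e')) from by simp [delσ0, σ2]]
        exact (twistAll G e' p hp q).trans (twistAll G e' p hp _).symm
      · subst h
        refine Quot.sound (Or.inl ?_)
        simp [petrial, σ0, delσ0, he]
    · exact Quot.sound (Or.inr h)

/-- A trivial loop bounds its own 2-cell: deleting it loses exactly one face. -/
lemma nFaces_eq_del_succ [Fintype E] (hp : G.s1 (e, p) = G.σ0 (e, p)) :
    G.nFaces = G.nFacesDel e + 1 := by
  classical
  have hA : G.σ0 (e, kAdd p (G.a e)) = (e, p) := by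
    show (e, kAdd (kAdd p (G.a e)) (G.a e)) = (e, p)
    rw [kAdd_kAdd]
  have hS : G.s1 (e, kAdd p (G.a e)) = (e, p) := by
    have h := G.s1_invol (e, p)
    rw [hp] at h
    exact h
  have hCσ0 : ∀ z : Flags E, (z = (e, p) ∨ z = (e, kAdd p (G.a e))) →
      (G.σ0 z = (e, p) ∨ G.σ0 z = (e, kAdd p (G.a e))) := by
    rintro z (rfl | rfl)
    · exact Or.inr rfl
    · exact Or.inl hA
  have hCs1 : ∀ z : Flags E, (z = (e, p) ∨ z = (e, kAdd p (G.a e))) →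
      (G.s1 z = (e, p) ∨ G.s1 z = (e, kAdd p (G.a e))) := by
    rintro z (rfl | rfl)
    · exact Or.inr hp
    · exact Or.inl hS
  have hp2 : ¬((e, kAdd p (G.b e)) = ((e, p) : Flags E) ∨
      (e, kAdd p (G.b e)) = ((e, kAdd p (G.a e)) : Flags E)) := by
    rintro (h | h)
    · exact kNe1 p (G.b e) (G.b_ne e) (congrArg Prod.snd h)
    · exact kNe2 p (G.b e) (G.a e) (Ne.symm (G.ab_ne e)) (congrArg Prod.snd h)
  have lnk : Quot.mk G.faceStep ((e, kAdd p (G.b e)) : Flags E)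
      = Quot.mk G.faceStep (e, kAdd p (kAdd (G.a e) (G.b e))) := by
    refine Quot.sound (Or.inl ?_)
    show (e, kAdd p (kAdd (G.a e) (G.b e))) = (e, kAdd (kAdd p (G.b e)) (G.a e))
    rw [kA3]
  have key : Nat.card (Quot G.faceStep) = Nat.card (Quot (G.faceStepDel e) ⊕ Unit) := by
    apply Nat.card_congr
    refine ⟨Quot.lift (fun x => if x = (e, p) ∨ x = (e, kAdd p (G.a e)) then Sum.inr ()
        else Sum.inl (Quot.mk (G.faceStepDel e) x)) ?_,
      Sum.elim (Quot.lift (fun x => Quot.mk G.faceStep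
        (if x = (e, p) ∨ x = (e, kAdd p (G.a e)) then (e, kAdd p (G.b e)) else x)) ?_)
        (fun _ => Quot.mk G.faceStep (e, p)), ?_, ?_⟩
    · -- forward map is well defined
      intro x y hxy
      by_cases hx : x = (e, p) ∨ x = (e, kAdd p (G.a e))
      · have hy : y = (e, p) ∨ y = (e, kAdd p (G.a e)) := by
          rcases hxy with h | h
          · rw [h]; exact hCσ0 x hx
          · rw [h]; exact hCs1 x hx
        simp only [if_pos hx, if_pos hy]
      · have hy : ¬(y = (e, p) ∨ y = (e, kAdd p (G.a e))) := fun hy => hx (by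
          rcases hxy with h | h
          · rw [show x = G.σ0 y from by rw [h, σ0_σ0]]
            exact hCσ0 y hy
          · rw [show x = G.s1 y from by rw [h, G.s1_invol]]
            exact hCs1 y hy)
        simp only [if_neg hx, if_neg hy]
        congr 1
        rcases hxy with h | h
        · obtain ⟨e', q⟩ := x
          by_cases he : e' = e
          · subst he
            subst h
            exact (delAll G e' p hp q).trans (delAll G e' p hp (kAdd q (G.a e'))).symm
          · subst h
            exact Quot.sound (Or.inl (by simp [delσ0, he]))
        · subst h
          exact Quot.sound (Or.inr rfl)
    · -- backward map is well defined
      intro x y hxy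
      rcases hxy with h | h
      · obtain ⟨e', q⟩ := x
        by_cases he : e' = e
        · subst he
          subst h
          rw [show G.delσ0 e' (e', q) = ((e', kAdd q (G.b e')) : Flags E) from by
            simp [delσ0, σ2]]
          beta_reduce
          rcases kCover p q (G.a e') (G.b e') (G.a_ne e') (G.b_ne e') (G.ab_ne e')
            with h | h | h | h <;> subst h
          · rw [if_pos (Or.inl rfl), if_neg hp2]
          · rw [if_pos (Or.inr rfl), kA1,
              if_neg (by
                rintro (h | h)
                · exact kNe3 p (G.a e') (G.b e') (G.ab_ne e') (congrArg Prod.snd h)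
                · exact kNe4 p (G.a e') (G.b e') (G.b_ne e') (congrArg Prod.snd h))]
            exact lnk
          · rw [if_neg hp2, kAdd_kAdd, if_pos (Or.inl rfl)]
          · rw [if_neg (by
                rintro (h | h)
                · exact kNe3 p (G.a e') (G.b e') (G.ab_ne e') (congrArg Prod.snd h)
                · exact kNe4 p (G.a e') (G.b e') (G.b_ne e') (congrArg Prod.snd h)),
              kA2, if_pos (Or.inr rfl)]
            exact lnk.symm
        · subst h
          rw [show G.delσ0 e (e', q) = G.σ0 (e', q) from by simp [delσ0, he]]
          beta_reduce
          rw [if_neg (by rintro (h | h) <;> exact he (congrArg Prod.fst h)),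
            if_neg (by rintro (h | h) <;> exact he (congrArg Prod.fst h))]
          exact Quot.sound (Or.inl rfl)
      · by_cases hx : x = (e, p) ∨ x = (e, kAdd p (G.a e))
        · have hy : y = (e, p) ∨ y = (e, kAdd p (G.a e)) := by
            rw [h]; exact hCs1 x hx
          beta_reduce
          rw [if_pos hx, if_pos hy]
        · have hy : ¬(y = (e, p) ∨ y = (e, kAdd p (G.a e))) := fun hy => hx (by
            rw [show x = G.s1 y from by rw [h, G.s1_invol]]
            exact hCs1 y hy)
          beta_reduce
          rw [if_neg hx, if_neg hy]
          exact Quot.sound (Or.inr h)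
    · -- left inverse
      intro q
      induction q using Quot.ind with
      | _ x =>
        by_cases hx : x = (e, p) ∨ x = (e, kAdd p (G.a e))
        · show Sum.elim _ _ (if x = (e, p) ∨ x = (e, kAdd p (G.a e)) then Sum.inr ()
            else Sum.inl (Quot.mk (G.faceStepDel e) x)) = Quot.mk G.faceStep x
          rw [if_pos hx]
          rcases hx with h | h <;> rw [h]
          · rfl
          · exact Quot.sound (Or.inl rfl)
        · show Sum.elim _ _ (if x = (e, p) ∨ x = (e, kAdd p (G.a e)) then Sum.inr ()
            else Sum.inl (Quot.mk (G.faceStepDel e) x)) = Quot.mk G.faceStep x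
          rw [if_neg hx]
          show Quot.mk G.faceStep (if x = (e, p) ∨ x = (e, kAdd p (G.a e))
            then (e, kAdd p (G.b e)) else x) = Quot.mk G.faceStep x
          rw [if_neg hx]
    · -- right inverse
      rintro (q | ⟨⟩)
      · induction q using Quot.ind with
        | _ x =>
          simp only [Sum.elim_inl, Quot.lift_mk]
          by_cases hx : x = (e, p) ∨ x = (e, kAdd p (G.a e))
          · rw [if_pos hx, if_neg hp2]
            refine congrArg Sum.inl ?_
            refine (delAll G e p hp (kAdd p (G.b e))).trans ?_
            rcases hx with h | h <;> rw [h]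
            exact (delAll G e p hp (kAdd p (G.a e))).symm
          · rw [if_neg hx, if_neg hx]
      · simp
  have hfin : Finite (Quot (G.faceStepDel e)) :=
    Finite.of_surjective (Quot.mk _) Quot.exists_rep
  unfold nFaces nFacesDel
  rw [key, Nat.card_sum]
  simp

end TrivialLoop

/-- If `e` is a non-twisted loop of `G` bounding a 2-cell, then
`P(G;λ) = (λ − 1) P(G − e;λ)`. -/
theorem stmt8 {E : Type} [Fintype E] [DecidableEq E] (G : RibbonGraph E) (e : E)
    (h : G.IsTrivialLoop e) :
    G.penrose = (X - 1) * G.penroseDel e := by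
  classical
  obtain ⟨p, hp⟩ := h
  have hps : (Finset.univ : Finset E).powerset
      = (insert e (Finset.univ.erase e)).powerset := by
    rw [Finset.insert_erase (Finset.mem_univ e)]
  unfold penrose penroseDel
  rw [hps, Finset.sum_powerset_insert (Finset.notMem_erase e Finset.univ), Finset.mul_sum,
    ← Finset.sum_add_distrib]
  refine Finset.sum_congr rfl fun A hA => ?_
  have heA : e ∉ A := fun hmem =>
    (Finset.mem_erase.mp (Finset.mem_powerset.mp hA hmem)).1 rfl
  have hTL : (G.petrial A).s1 (e, p) = (G.petrial A).σ0 (e, p) := by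
    show G.s1 (e, p) = _
    rw [hp]
    show (e, kAdd p (G.a e)) = (e, kAdd p ((G.petrial A).a e))
    simp [petrial, heA]
  have h1 : (G.petrial A).nFaces = (G.petrial A).nFacesDel e + 1 :=
    nFaces_eq_del_succ (G.petrial A) e p hTL
  have h2 : (G.petrial (insert e A)).nFaces = (G.petrial A).nFacesDel e := by
    have ha : (G.petrial (insert e A)).a = ((G.petrial A).petrial {e}).a := by
      funext e'
      by_cases h1 : e' = e
      · subst h1
        simp [petrial, heA]
      · simp [petrial, h1]
    have hfs : (G.petrial (insert e A)).faceStep = ((G.petrial A).petrial {e}).faceStep := by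
      funext x y
      unfold faceStep σ0
      rw [ha]
      rfl
    have hcong : (G.petrial (insert e A)).nFaces = ((G.petrial A).petrial {e}).nFaces := by
      unfold nFaces
      rw [hfs]
    rw [hcong]
    exact nFaces_petrial_eq_del (G.petrial A) e p hTL
  rw [h1, h2, Finset.card_insert_of_notMem heA]
  ring

end RibbonGraph

end Penrose
end
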